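/- arXiv:1903.05818 — 4 statements merged into one kernel-verified Lean document; each statement's English description precedes it below -/
import Mathlib

section
/- For the Jensen-Shannon generator f, for every integer i ≥ 2 one has f^{(i)}(1)/i! = (-1)^{i-2} (1 - 1/2^{i-1}) / (i(i-1)). -/
/-! On `(0, ∞)` the generator satisfies `f'' u = 1/u - 1/(1 + u)`, whose `n`-th derivative is
`(-1)^n n! (u^{-(n+1)} - (1 + u)^{-(n+1)})`. At `u = 1` this gives
`f^{(n+2)}(1) = (-1)^n n! (1 - 2^{-(n+1)})`, and dividing by `(n+2)!` leaves `(n+2)(n+1)` in the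
denominator. -/

open Real Topology

noncomputable def jsGenerator (u : ℝ) : ℝ := -(u + 1) * log ((1 + u) / 2) + u * log u

theorem iteratedDeriv_inv {𝕜 : Type*} [NontriviallyNormedField 𝕜] (n : ℕ) (x : 𝕜) :
    iteratedDeriv n Inv.inv x = (-1) ^ n * n.factorial / x ^ (n + 1) := by
  rw [iteratedDeriv_eq_iterate, iter_deriv_inv, div_eq_mul_inv,
    show (-1 - n : ℤ) = -((n + 1 : ℕ) : ℤ) by push_cast; ring, zpow_neg, zpow_natCast]

theorem hasDerivAt_log_one_add_div_two {u : ℝ} (hu : 1 + u ≠ 0) :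
    HasDerivAt (fun u => log ((1 + u) / 2)) (1 + u)⁻¹ u := by
  convert (((hasDerivAt_id' u).const_add 1).div_const 2).log (by positivity) using 1
  field_simp

theorem hasDerivAt_jsGenerator {u : ℝ} (hu : 0 < u) :
    HasDerivAt jsGenerator (log u - log ((1 + u) / 2)) u := by
  have h := (((hasDerivAt_id' u).add_const 1).fun_neg.fun_mul
    (hasDerivAt_log_one_add_div_two (by positivity))).fun_add
    ((hasDerivAt_id' u).fun_mul (hasDerivAt_log hu.ne'))
  refine h.congr_deriv ?_
  field_simp
  ring

theorem deriv_deriv_jsGenerator_eventuallyEq {x : ℝ} (hx : 0 < x) :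
    deriv (deriv jsGenerator) =ᶠ[𝓝 x] fun u => u⁻¹ - (u + 1)⁻¹ := by
  filter_upwards [lt_mem_nhds hx] with u hu
  have hderiv : deriv jsGenerator =ᶠ[𝓝 u] fun u => log u - log ((1 + u) / 2) := by
    filter_upwards [lt_mem_nhds hu] with v hv using (hasDerivAt_jsGenerator hv).deriv
  rw [hderiv.deriv_eq, (HasDerivAt.fun_sub (hasDerivAt_log hu.ne')
    (hasDerivAt_log_one_add_div_two (by positivity))).deriv, add_comm]

theorem iteratedDeriv_add_two_jsGenerator (n : ℕ) {x : ℝ} (hx : 0 < x) :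
    iteratedDeriv (n + 2) jsGenerator x
      = (-1) ^ n * n.factorial * (1 / x ^ (n + 1) - 1 / (x + 1) ^ (n + 1)) := by
  have hinv_shift : ContDiffAt ℝ n (fun u : ℝ => (u + 1)⁻¹) x :=
    (contDiffAt_id.add contDiffAt_const).inv (by positivity)
  rw [iteratedDeriv_succ', iteratedDeriv_succ',
    (deriv_deriv_jsGenerator_eventuallyEq hx).iteratedDeriv_eq,
    iteratedDeriv_fun_sub (contDiffAt_inv ℝ hx.ne') hinv_shift,
    iteratedDeriv_comp_add_const]
  simp only [iteratedDeriv_inv]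
  ring

/-- For the Jensen-Shannon generator `f`, for every integer `i ≥ 2` one has
`f^(i)(1)/i! = (-1)^(i-2) (1 - 1/2^(i-1)) / (i(i-1))`. -/
theorem js_generator_taylor_coeff (i : ℕ) (hi : 2 ≤ i) :
    iteratedDeriv i (fun u : ℝ => -(u + 1) * Real.log ((1 + u) / 2) + u * Real.log u) 1
      / (Nat.factorial i)
      = (-1 : ℝ) ^ (i - 2) * (1 - 1 / 2 ^ (i - 1)) / ((i : ℝ) * ((i : ℝ) - 1)) := by
  obtain ⟨n, rfl⟩ := Nat.exists_eq_add_of_le' hi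
  change iteratedDeriv (n + 2) jsGenerator 1 / _ = _
  rw [iteratedDeriv_add_two_jsGenerator n one_pos, Nat.factorial_succ, Nat.factorial_succ,
    Nat.add_sub_cancel, show n + 2 - 1 = n + 1 by omega]
  push_cast
  rw [show (n : ℝ) + 2 - 1 = n + 1 by ring]
  field_simp
  ring
end

section
/- Let p, q be probability density functions on a measure space with m ≤ q(x)/p(x) ≤ M almost everywhere, where 0 < m ≤ 1 ≤ M. Then for every integer s ≥ 2, χ_s(p:q) := ∫ |q(x) - p(x)|^s / p(x)^{s-1} dμ(x) ≤ (M - m)^s. -/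
/-!
Where `p > 0`, the integrand equals `|q/p - 1|^s * p`, and `|q/p - 1| ≤ M - m` because both
`q/p` and `1` lie in `[m, M]`. Hence the integrand is dominated by `(M - m)^s * p`, whose
integral is `(M - m)^s`. The hypothesis `0 < m` forces `p > 0` wherever the ratio bound holds,
since `q/0 = 0` in Lean.
-/

open MeasureTheory

lemma abs_sub_pow_div_pow_pred_eq {p : ℝ} (q : ℝ) (hp : 0 < p) {s : ℕ} (hs : s ≠ 0) :
    |q - p| ^ s / p ^ (s - 1) = |q / p - 1| ^ s * p := by
  obtain ⟨t, rfl⟩ := Nat.exists_eq_succ_of_ne_zero hs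
  have hqp : q - p = (q / p - 1) * p := by field_simp
  rw [hqp, abs_mul, abs_of_pos hp, mul_pow, Nat.succ_sub_one, pow_succ p t, mul_div_assoc,
    mul_div_cancel_left₀ _ (pow_ne_zero t hp.ne')]

lemma abs_sub_pow_div_pow_pred_le_of_div_mem_Icc {p q m M : ℝ} (hp : 0 ≤ p) (hm : 0 < m)
    (hm1 : m ≤ 1) (hM1 : 1 ≤ M) (hr : q / p ∈ Set.Icc m M) {s : ℕ} (hs : s ≠ 0) :
    |q - p| ^ s / p ^ (s - 1) ≤ (M - m) ^ s * p := by
  have hp_pos : 0 < p := hp.lt_of_ne fun h ↦ by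
    rw [← h, div_zero] at hr
    exact hm.not_ge hr.1
  have hdist : |q / p - 1| ≤ M - m := Real.dist_le_of_mem_Icc hr ⟨hm1, hM1⟩
  rw [abs_sub_pow_div_pow_pred_eq q hp_pos hs]
  gcongr

theorem abs_chi_bounded_ratio_general {X : Type*} [MeasurableSpace X] (μ : Measure X)
    (p q : X → ℝ)
    (hp0 : ∀ x, 0 ≤ p x)
    (hp1 : ∫ x, p x ∂μ = 1)
    (m M : ℝ) (hm : 0 < m) (hm1 : m ≤ 1) (hM1 : 1 ≤ M)
    (hratio : ∀ᵐ x ∂μ, m ≤ q x / p x ∧ q x / p x ≤ M) :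
    ∀ s : ℕ, 2 ≤ s →
      ∫ x, |q x - p x| ^ s / p x ^ (s - 1) ∂μ ≤ (M - m) ^ s := by
  intro s hs
  have hp_int : Integrable p μ := Integrable.of_integral_ne_zero (by simp [hp1])
  calc ∫ x, |q x - p x| ^ s / p x ^ (s - 1) ∂μ
      ≤ ∫ x, (M - m) ^ s * p x ∂μ := by
        refine integral_mono_of_nonneg (ae_of_all _ fun x ↦ ?_) (hp_int.const_mul _) ?_
        · have := hp0 x
          positivity
        · filter_upwards [hratio] with x hx
          exact abs_sub_pow_div_pow_pred_le_of_div_mem_Icc (hp0 x) hm hm1 hM1 hx (by omega)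
    _ = (M - m) ^ s := by rw [integral_const_mul, hp1, mul_one]

/-- For probability densities `p, q` with `m ≤ q/p ≤ M` a.e., `0 < m ≤ 1 ≤ M`, we have
`χ_s(p:q) = ∫ |q - p|^s / p^(s-1) dμ ≤ (M - m)^s` for every integer `s ≥ 2`. -/
theorem abs_chi_bounded_ratio {X : Type*} [MeasurableSpace X] (μ : Measure X)
    (p q : X → ℝ) (hpm : Measurable p) (hqm : Measurable q)
    (hp0 : ∀ x, 0 ≤ p x) (hq0 : ∀ x, 0 ≤ q x)
    (hp1 : ∫ x, p x ∂μ = 1) (hq1 : ∫ x, q x ∂μ = 1)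
    (m M : ℝ) (hm : 0 < m) (hm1 : m ≤ 1) (hM1 : 1 ≤ M)
    (hratio : ∀ᵐ x ∂μ, m ≤ q x / p x ∧ q x / p x ≤ M) :
    ∀ s : ℕ, 2 ≤ s →
      ∫ x, |q x - p x| ^ s / p x ^ (s - 1) ∂μ ≤ (M - m) ^ s :=
  abs_chi_bounded_ratio_general μ p q hp0 hp1 m M hm hm1 hM1 hratio
end

section
/- Let f : (0,∞) → ℝ be (k+1)-times continuously differentiable with f(1) = f'(1) = 0 and |f^{(k+1)}(u)| ≤ L on [m, M], where 0 < m ≤ 1 ≤ M. Let p, q be probability densities with m ≤ q(x)/p(x) ≤ M a.e. Then |I_f(p:q) - Σ_{i=2}^{k} f^{(i)}(1)/i! · χ_i^±(p:q)| ≤ L/(k+1)! · (M - m)^{k+1}, where I_f(p:q) = ∫ p f(q/p) dμ and χ_i^±(p:q) = ∫ (q-p)^i/p^{i-1} dμ. -/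
/-!
On the set where `p > 0` the integrand is `p · (f(u) - T(u))` with `u = q/p` and `T` the degree-`k`
Taylor polynomial of `f` at `1` (its terms of degree `0` and `1` vanish because
`f(1) = f'(1) = 0`, and the degree-`i` term integrates to `χ_i^±(p:q)`). Taylor's theorem with
Lagrange remainder bounds `|f(u) - T(u)|` by `L/(k+1)! · |u - 1|^(k+1) ≤ L/(k+1)! · (M - m)^(k+1)`
for `u ∈ [m, M]`, and integrating against `p`, which has mass `1`, gives the claim.
-/

open MeasureTheory Set
open scoped Nat

theorem taylorWithinEval_uIcc_eq_sum {f : ℝ → ℝ} {n : ℕ} {s : Set ℝ} (hs : IsOpen s)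
    (hf : ContDiffOn ℝ n f s) {x₀ x : ℝ} (hx : x₀ ≠ x) (hx₀ : x₀ ∈ s) :
    taylorWithinEval f n (uIcc x₀ x) x₀ x =
      ∑ i ∈ Finset.range (n + 1), iteratedDeriv i f x₀ / i ! * (x - x₀) ^ i := by
  rw [taylor_within_apply]
  refine Finset.sum_congr rfl fun i hi => ?_
  have hin : (i : WithTop ℕ∞) ≤ n := by
    exact_mod_cast Nat.lt_succ_iff.mp (Finset.mem_range.mp hi)
  rw [iteratedDerivWithin_eq_iteratedDeriv (uniqueDiffOn_uIcc hx)
    ((hf.contDiffAt (hs.mem_nhds hx₀)).of_le hin) left_mem_uIcc, smul_eq_mul]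
  ring

theorem abs_sub_taylor_sum_le {f : ℝ → ℝ} {n : ℕ} {s : Set ℝ} (hs : IsOpen s)
    (hf : ContDiffOn ℝ (n + 1) f s) {x₀ x C : ℝ} (hsub : uIcc x₀ x ⊆ s)
    (hC : ∀ y ∈ uIoo x₀ x, |iteratedDeriv (n + 1) f y| ≤ C) :
    |f x - ∑ i ∈ Finset.range (n + 1), iteratedDeriv i f x₀ / i ! * (x - x₀) ^ i|
      ≤ C / (n + 1)! * |x - x₀| ^ (n + 1) := by
  rcases eq_or_ne x₀ x with rfl | hx
  · simp [Finset.sum_range_succ']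
  obtain ⟨y, hy, hrem⟩ := taylor_mean_remainder_lagrange_iteratedDeriv hx (hf.mono hsub)
  rw [← taylorWithinEval_uIcc_eq_sum hs hf.of_succ hx (hsub left_mem_uIcc), hrem, abs_div,
    abs_mul, abs_pow, Nat.abs_cast, div_mul_eq_mul_div]
  gcongr
  exact hC y hy

theorem Finset.sum_Icc_two_eq_sum_range {M : Type*} [AddCommMonoid M] {g : ℕ → M}
    (h0 : g 0 = 0) (h1 : g 1 = 0) (k : ℕ) :
    ∑ i ∈ Finset.Icc 2 k, g i = ∑ i ∈ Finset.range (k + 1), g i := by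
  refine Finset.sum_subset (fun i hi => ?_) fun i hi hi' => ?_
  · simp only [Finset.mem_Icc, Finset.mem_range] at hi ⊢
    omega
  · simp only [Finset.mem_Icc, Finset.mem_range] at hi hi'
    obtain rfl | rfl : i = 0 ∨ i = 1 := by omega
    exacts [h0, h1]

theorem abs_sub_taylor_sum_Icc_two_le {f : ℝ → ℝ} {k : ℕ} {L m M u : ℝ}
    (hf : ContDiffOn ℝ (k + 1) f (Ioi 0)) (hf1 : f 1 = 0) (hf'1 : deriv f 1 = 0)
    (hm : 0 < m) (h1 : 1 ∈ Icc m M) (hL : ∀ y ∈ Icc m M, |iteratedDeriv (k + 1) f y| ≤ L)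
    (hu : u ∈ Icc m M) :
    |f u - ∑ i ∈ Finset.Icc 2 k, iteratedDeriv i f 1 / i ! * (u - 1) ^ i|
      ≤ L / (k + 1)! * (M - m) ^ (k + 1) := by
  have hsub : uIcc 1 u ⊆ Icc m M := uIcc_subset_Icc h1 hu
  rw [Finset.sum_Icc_two_eq_sum_range (by simp [hf1]) (by simp [hf'1])]
  calc _ ≤ L / (k + 1)! * |u - 1| ^ (k + 1) :=
        abs_sub_taylor_sum_le isOpen_Ioi hf (hsub.trans fun y hy => hm.trans_le hy.1)
          fun y hy => hL y (hsub (uIoo_subset_uIcc_self hy))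
    _ ≤ L / (k + 1)! * (M - m) ^ (k + 1) := by
        have hL0 : 0 ≤ L := (abs_nonneg _).trans (hL 1 h1)
        gcongr
        exact abs_sub_le_iff.mpr ⟨by linarith [hu.2, h1.1], by linarith [hu.1, h1.2]⟩

theorem sub_pow_div_pow_pred_eq_mul {K : Type*} [Field K] {a : K} (b : K) (ha : a ≠ 0) {i : ℕ}
    (hi : i ≠ 0) : (b - a) ^ i / a ^ (i - 1) = a * (b / a - 1) ^ i := by
  obtain ⟨j, rfl⟩ := Nat.exists_eq_succ_of_ne_zero hi
  rw [div_sub_one ha, div_pow, Nat.succ_sub_one, pow_succ a]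
  field_simp

theorem f_divergence_chi_expansion_bound_general {X : Type*} [MeasurableSpace X] (μ : Measure X)
    (p q : X → ℝ)
    (hp0 : ∀ x, 0 ≤ p x)
    (hp1 : ∫ x, p x ∂μ = 1)
    (f : ℝ → ℝ) (k : ℕ) (L m M : ℝ) (hm : 0 < m) (hm1 : m ≤ 1) (hM1 : 1 ≤ M)
    (hf : ContDiffOn ℝ (k + 1) f (Set.Ioi 0))
    (hf1 : f 1 = 0) (hf'1 : deriv f 1 = 0)
    (hL : ∀ u ∈ Set.Icc m M, |iteratedDeriv (k + 1) f u| ≤ L)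
    (hratio : ∀ᵐ x ∂μ, m ≤ q x / p x ∧ q x / p x ≤ M)
    (hIf : Integrable (fun x => p x * f (q x / p x)) μ)
    (hchi : ∀ i : ℕ, 2 ≤ i → i ≤ k →
      Integrable (fun x => (q x - p x) ^ i / p x ^ (i - 1)) μ) :
    |∫ x, p x * f (q x / p x) ∂μ
        - ∑ i ∈ Finset.Icc 2 k,
            iteratedDeriv i f 1 / (Nat.factorial i)
              * ∫ x, (q x - p x) ^ i / p x ^ (i - 1) ∂μ|
      ≤ L / (Nat.factorial (k + 1)) * (M - m) ^ (k + 1) := by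
  set C := L / (k + 1)! * (M - m) ^ (k + 1)
  -- `q / p = 0 < m` wherever `p = 0`, because of the convention `q / 0 = 0`.
  have hp_pos : ∀ᵐ x ∂μ, 0 < p x := hratio.mono fun x hx =>
    (hp0 x).lt_of_ne fun h => by simp [← h] at hx; linarith [hx.1]
  have hp_int : Integrable p μ := Integrable.of_integral_ne_zero (by simp [hp1])
  have hterm_int : ∀ i ∈ Finset.Icc 2 k, Integrable
      (fun x => iteratedDeriv i f 1 / i ! * ((q x - p x) ^ i / p x ^ (i - 1))) μ :=
    fun i hi => (hchi i (Finset.mem_Icc.1 hi).1 (Finset.mem_Icc.1 hi).2).const_mul _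
  simp_rw [← integral_const_mul]
  rw [← integral_finsetSum _ hterm_int, ← integral_sub hIf (integrable_finsetSum _ hterm_int),
    ← Real.norm_eq_abs]
  calc _ ≤ ∫ x, C * p x ∂μ := norm_integral_le_of_norm_le (hp_int.const_mul C) ?_
    _ = C := by rw [integral_const_mul, hp1, mul_one]
  filter_upwards [hratio, hp_pos] with x hx hpx
  have hsum : ∑ i ∈ Finset.Icc 2 k, iteratedDeriv i f 1 / i ! * ((q x - p x) ^ i / p x ^ (i - 1))
      = p x * ∑ i ∈ Finset.Icc 2 k, iteratedDeriv i f 1 / i ! * (q x / p x - 1) ^ i := by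
    rw [Finset.mul_sum]
    refine Finset.sum_congr rfl fun i hi => ?_
    rw [sub_pow_div_pow_pred_eq_mul _ hpx.ne' (by grind)]
    ring
  rw [hsum, ← mul_sub, Real.norm_eq_abs, abs_mul, abs_of_pos hpx, mul_comm C]
  exact mul_le_mul_of_nonneg_left
    (abs_sub_taylor_sum_Icc_two_le hf hf1 hf'1 hm ⟨hm1, hM1⟩ hL hx) hpx.le

/-- Power chi expansion bound for `f`-divergences: if `f` is `(k+1)`-times continuously
differentiable on `(0,∞)` with `f(1) = f'(1) = 0` and `|f^(k+1)| ≤ L` on `[m, M]`, and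
`p, q` are probability densities with `m ≤ q/p ≤ M` a.e. (`0 < m ≤ 1 ≤ M`), then
`|I_f(p:q) - Σ_{i=2}^k f^(i)(1)/i! χ_i^±(p:q)| ≤ L/(k+1)! (M-m)^(k+1)`. -/
theorem f_divergence_chi_expansion_bound {X : Type*} [MeasurableSpace X] (μ : Measure X)
    (p q : X → ℝ) (hpm : Measurable p) (hqm : Measurable q)
    (hp0 : ∀ x, 0 ≤ p x) (hq0 : ∀ x, 0 ≤ q x)
    (hp1 : ∫ x, p x ∂μ = 1) (hq1 : ∫ x, q x ∂μ = 1)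
    (f : ℝ → ℝ) (k : ℕ) (L m M : ℝ) (hm : 0 < m) (hm1 : m ≤ 1) (hM1 : 1 ≤ M)
    (hf : ContDiffOn ℝ (k + 1) f (Set.Ioi 0))
    (hf1 : f 1 = 0) (hf'1 : deriv f 1 = 0)
    (hL : ∀ u ∈ Set.Icc m M, |iteratedDeriv (k + 1) f u| ≤ L)
    (hratio : ∀ᵐ x ∂μ, m ≤ q x / p x ∧ q x / p x ≤ M)
    (hIf : Integrable (fun x => p x * f (q x / p x)) μ)
    (hchi : ∀ i : ℕ, 2 ≤ i → i ≤ k →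
      Integrable (fun x => (q x - p x) ^ i / p x ^ (i - 1)) μ) :
    |∫ x, p x * f (q x / p x) ∂μ
        - ∑ i ∈ Finset.Icc 2 k,
            iteratedDeriv i f 1 / (Nat.factorial i)
              * ∫ x, (q x - p x) ^ i / p x ^ (i - 1) ∂μ|
      ≤ L / (Nat.factorial (k + 1)) * (M - m) ^ (k + 1) :=
  f_divergence_chi_expansion_bound_general μ p q hp0 hp1 f k L m M hm hm1 hM1 hf hf1 hf'1 hL hratio
    hIf hchi
end

section
/- Let p(x;θ₁) and p(x;θ₂) be Poisson probability mass functions with rates λ₁ = e^{θ₁} and λ₂ = e^{θ₂}. For integers 0 ≤ j, Σ_{x=0}^{∞} p(x;θ₁)^{1-j} p(x;θ₂)^j = exp(λ₁(λ₂/λ₁)^j + (j-1)λ₁ - jλ₂). Consequently χ_k^±(λ₁:λ₂) = Σ_{j=0}^{k} (-1)^{k-j} C(k,j) exp(λ₁(λ₂/λ₁)^j + (j-1)λ₁ - jλ₂). -/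
/-!
The likelihood ratio of two Poisson laws is `p(x;λ₂)/p(x;λ₁) = (λ₂/λ₁)^x e^{λ₁-λ₂}`, so
`p₁^{1-j} p₂^j = p₁ (p₂/p₁)^j` is, up to the constant `e^{(j-1)λ₁ - jλ₂}`, the exponential-series
term `(λ₁(λ₂/λ₁)^j)^x / x!`; this holds for every integer `j`. Expanding `(p₂ - p₁)^k / p₁^{k-1}`
by the binomial theorem into such terms and summing termwise gives the χ-divergence.
-/

open Finset Nat

noncomputable def poisson (l : ℝ) (x : ℕ) : ℝ := l ^ x * Real.exp (-l) / x !

lemma zpow_one_sub_mul_zpow {K : Type*} [Field K] {p : K} (hp : p ≠ 0) (q : K) (j : ℤ) :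
    p ^ (1 - j) * q ^ j = p * (q / p) ^ j := by
  rw [zpow_sub₀ hp, zpow_one, div_zpow]; ring

lemma poisson_ne_zero {l : ℝ} (hl : l ≠ 0) (x : ℕ) : poisson l x ≠ 0 := by
  have := x.factorial_pos
  unfold poisson
  positivity

lemma poisson_div_poisson {l₁ : ℝ} (hl₁ : l₁ ≠ 0) (l₂ : ℝ) (x : ℕ) :
    poisson l₂ x / poisson l₁ x = (l₂ / l₁) ^ x * Real.exp (l₁ - l₂) := by
  have := x.factorial_pos
  unfold poisson
  rw [sub_eq_add_neg, Real.exp_add, Real.exp_neg l₁, div_pow]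
  field_simp

lemma poisson_zpow_one_sub_mul_zpow {l₁ : ℝ} (hl₁ : l₁ ≠ 0) (l₂ : ℝ) (j : ℤ) (x : ℕ) :
    poisson l₁ x ^ (1 - j) * poisson l₂ x ^ j
      = (l₁ * (l₂ / l₁) ^ j) ^ x / x ! * Real.exp ((j - 1) * l₁ - j * l₂) := by
  have hexp : Real.exp (l₁ - l₂) ^ j = Real.exp (j * (l₁ - l₂)) := by
    rw [Real.exp_eq_exp_ℝ, ← NormedSpace.exp_zsmul, zsmul_eq_mul]
  rw [zpow_one_sub_mul_zpow (poisson_ne_zero hl₁ x), poisson_div_poisson hl₁, mul_zpow,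
    ← zpow_natCast, ← zpow_mul, mul_comm (x : ℤ), zpow_mul, zpow_natCast, hexp, poisson,
    mul_pow, show (j - 1) * l₁ - j * l₂ = -l₁ + j * (l₁ - l₂) by ring, Real.exp_add]
  ring

lemma Real.hasSum_pow_div_factorial (a : ℝ) : HasSum (fun n ↦ a ^ n / n !) (Real.exp a) := by
  rw [Real.exp_eq_exp_ℝ]
  exact NormedSpace.expSeries_div_hasSum_exp a

lemma hasSum_poisson_zpow_one_sub_mul_zpow {l₁ : ℝ} (hl₁ : l₁ ≠ 0) (l₂ : ℝ) (j : ℤ) :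
    HasSum (fun x ↦ poisson l₁ x ^ (1 - j) * poisson l₂ x ^ j)
      (Real.exp (l₁ * (l₂ / l₁) ^ j + (j - 1) * l₁ - j * l₂)) := by
  rw [add_sub_assoc, Real.exp_add]
  simp_rw [poisson_zpow_one_sub_mul_zpow hl₁]
  exact (Real.hasSum_pow_div_factorial _).mul_right _

lemma hasSum_poisson_pow_one_sub_mul_pow {l₁ : ℝ} (hl₁ : l₁ ≠ 0) (l₂ : ℝ) (j : ℕ) :
    HasSum (fun x ↦ poisson l₁ x ^ (1 - (j : ℤ)) * poisson l₂ x ^ (j : ℤ))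
      (Real.exp (l₁ * (l₂ / l₁) ^ j + ((j : ℝ) - 1) * l₁ - j * l₂)) := by
  exact_mod_cast hasSum_poisson_zpow_one_sub_mul_zpow hl₁ l₂ j

lemma sub_pow_div_pow_pred_eq_sum {K : Type*} [Field K] {a : K} (ha : a ≠ 0) (b : K) {k : ℕ}
    (hk : 1 ≤ k) :
    (b - a) ^ k / a ^ (k - 1)
      = ∑ j ∈ range (k + 1),
          (-1) ^ (k - j) * (k.choose j : K) * (a ^ (1 - (j : ℤ)) * b ^ (j : ℤ)) := by
  rw [sub_eq_add_neg, add_pow, sum_div]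
  refine sum_congr rfl fun j hj ↦ ?_
  have hjk : j ≤ k := Nat.lt_succ_iff.mp (mem_range.mp hj)
  rw [neg_pow, zpow_sub₀ ha, zpow_one, zpow_natCast, zpow_natCast, pow_sub₀ _ ha hjk,
    pow_sub₀ _ ha hk]
  field_simp

lemma hasSum_poisson_chi {l₁ : ℝ} (hl₁ : l₁ ≠ 0) (l₂ : ℝ) {k : ℕ} (hk : 1 ≤ k) :
    HasSum (fun x ↦ (poisson l₂ x - poisson l₁ x) ^ k / poisson l₁ x ^ (k - 1))
      (∑ j ∈ range (k + 1), (-1) ^ (k - j) * (k.choose j : ℝ)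
        * Real.exp (l₁ * (l₂ / l₁) ^ j + ((j : ℝ) - 1) * l₁ - j * l₂)) := by
  simp_rw [sub_pow_div_pow_pred_eq_sum (poisson_ne_zero hl₁ _) _ hk]
  exact hasSum_sum fun j _ ↦ (hasSum_poisson_pow_one_sub_mul_pow hl₁ l₂ j).mul_left _

theorem poisson_chi_closed_form_general (l₁ l₂ : ℝ) (hl₁ : 0 < l₁)
    (p₁ p₂ : ℕ → ℝ)
    (hp₁ : ∀ x, p₁ x = l₁ ^ x * Real.exp (-l₁) / (Nat.factorial x))
    (hp₂ : ∀ x, p₂ x = l₂ ^ x * Real.exp (-l₂) / (Nat.factorial x))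
    (k : ℕ) (hk : 2 ≤ k) :
    (∀ j : ℕ,
      ∑' x : ℕ, p₁ x ^ ((1 : ℤ) - (j : ℤ)) * p₂ x ^ (j : ℤ)
        = Real.exp (l₁ * (l₂ / l₁) ^ j + ((j : ℝ) - 1) * l₁ - (j : ℝ) * l₂))
    ∧ ∑' x : ℕ, (p₂ x - p₁ x) ^ k / p₁ x ^ (k - 1)
        = ∑ j ∈ Finset.range (k + 1),
            (-1 : ℝ) ^ (k - j) * (Nat.choose k j : ℝ)
              * Real.exp (l₁ * (l₂ / l₁) ^ j + ((j : ℝ) - 1) * l₁ - (j : ℝ) * l₂) := by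
  obtain rfl : p₁ = poisson l₁ := funext hp₁
  obtain rfl : p₂ = poisson l₂ := funext hp₂
  exact ⟨fun j ↦ (hasSum_poisson_pow_one_sub_mul_pow hl₁.ne' l₂ j).tsum_eq,
    (hasSum_poisson_chi hl₁.ne' l₂ (by omega)).tsum_eq⟩

/-- For Poisson pmfs with rates `λ₁ = e^θ₁` and `λ₂ = e^θ₂`: for every integer `j ≥ 0`,
`Σ_x p(x;θ₁)^(1-j) p(x;θ₂)^j = exp(λ₁(λ₂/λ₁)^j + (j-1)λ₁ - jλ₂)`, and consequently
`χ_k^±(λ₁:λ₂) = Σ_{j=0}^k (-1)^(k-j) C(k,j) exp(λ₁(λ₂/λ₁)^j + (j-1)λ₁ - jλ₂)`. -/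
theorem poisson_chi_closed_form (l₁ l₂ : ℝ) (hl₁ : 0 < l₁) (hl₂ : 0 < l₂)
    (p₁ p₂ : ℕ → ℝ)
    (hp₁ : ∀ x, p₁ x = l₁ ^ x * Real.exp (-l₁) / (Nat.factorial x))
    (hp₂ : ∀ x, p₂ x = l₂ ^ x * Real.exp (-l₂) / (Nat.factorial x))
    (k : ℕ) (hk : 2 ≤ k) :
    (∀ j : ℕ,
      ∑' x : ℕ, p₁ x ^ ((1 : ℤ) - (j : ℤ)) * p₂ x ^ (j : ℤ)
        = Real.exp (l₁ * (l₂ / l₁) ^ j + ((j : ℝ) - 1) * l₁ - (j : ℝ) * l₂))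
    ∧ ∑' x : ℕ, (p₂ x - p₁ x) ^ k / p₁ x ^ (k - 1)
        = ∑ j ∈ Finset.range (k + 1),
            (-1 : ℝ) ^ (k - j) * (Nat.choose k j : ℝ)
              * Real.exp (l₁ * (l₂ / l₁) ^ j + ((j : ℝ) - 1) * l₁ - (j : ℝ) * l₂) :=
  poisson_chi_closed_form_general l₁ l₂ hl₁ p₁ p₂ hp₁ hp₂ k hk
end
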